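/- Suppose that for every x ∈ ℝ^{d_x} the operator norm bound ‖(I − K H) ∘ DF(x)‖ ≤ λ holds for some constant λ > 0. Let the true signal satisfy x_t^true = F(x_{t−1}^true) and the observations y_t = H x_t^true + γ η_t for t ≥ 1, where η_t are random vectors in ℝ^{d_y} with E‖η_t‖ ≤ A for a constant A > 0, and let the operational 3DVar filter satisfy x_t^o = (I − K H) F(x_{t−1}^o) + K y_t. Then for every t ≥ 1, E‖x_t^o − x_t^true‖ ≤ λ E‖x_{t−1}^o − x_{t−1}^true‖ + γ ‖K‖ A. -/

import Mathlib

open MeasureTheory Filter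

abbrev Ex (d : ℕ) := EuclideanSpace ℝ (Fin d)

/-! Since `x^true_t = (I - K H) F x^true_{t-1} + K H F x^true_{t-1}`, the error after one step is
`(I - K H) (F x^o_{t-1} - F x^true_{t-1}) + γ K η_t`. The mean value inequality and the bound on
`(I - K H) ∘ DF` make the first term at most `λ ‖e_{t-1}‖`, so `‖e_t‖ ≤ λ ‖e_{t-1}‖ + γ ‖K‖ ‖η_t‖`
pointwise; integrating gives the claim. -/

section MeanValue

variable {E F G : Type*} [NormedAddCommGroup E] [NormedSpace ℝ E]
  [NormedAddCommGroup F] [NormedSpace ℝ F] [NormedAddCommGroup G] [NormedSpace ℝ G]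

theorem ContinuousLinearMap.norm_map_sub_map_le_of_norm_comp_fderiv_le (L : F →L[ℝ] G)
    {f : E → F} (hf : Differentiable ℝ f) {C : ℝ} (hC : ∀ x, ‖L.comp (fderiv ℝ f x)‖ ≤ C)
    (a b : E) : ‖L (f a) - L (f b)‖ ≤ C * ‖a - b‖ :=
  convex_univ.norm_image_sub_le_of_norm_hasFDerivWithin_le (f := fun x => L (f x))
    (fun x _ => (L.hasFDerivAt.comp x (hf x).hasFDerivAt).hasFDerivWithinAt)
    (fun x _ => hC x) (Set.mem_univ b) (Set.mem_univ a)

end MeanValue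

section ThreeDVar

variable {X Y : Type*} [NormedAddCommGroup X] [NormedSpace ℝ X]
  [NormedAddCommGroup Y] [NormedSpace ℝ Y]

theorem threeDVar_step_sub_eq (F : X → X) (H : X →L[ℝ] Y) (K : Y →L[ℝ] X)
    (xo xtrue : X) (γ : ℝ) (η : Y) :
    ((ContinuousLinearMap.id ℝ X - K.comp H) (F xo) + K (H (F xtrue) + γ • η)) - F xtrue =
      ((ContinuousLinearMap.id ℝ X - K.comp H) (F xo) -
        (ContinuousLinearMap.id ℝ X - K.comp H) (F xtrue)) + γ • K η := by
  simp only [map_add, map_smul, sub_apply, ContinuousLinearMap.coe_id',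
    id_eq, ContinuousLinearMap.comp_apply]
  abel

theorem norm_threeDVar_step_sub_le {F : X → X} (hF : Differentiable ℝ F)
    (H : X →L[ℝ] Y) (K : Y →L[ℝ] X) {lam : ℝ}
    (hderiv : ∀ x, ‖(ContinuousLinearMap.id ℝ X - K.comp H).comp (fderiv ℝ F x)‖ ≤ lam)
    (xo xtrue : X) {γ : ℝ} (hγ : 0 ≤ γ) (η : Y) :
    ‖((ContinuousLinearMap.id ℝ X - K.comp H) (F xo) + K (H (F xtrue) + γ • η)) - F xtrue‖ ≤
      lam * ‖xo - xtrue‖ + γ * ‖K‖ * ‖η‖ := by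
  rw [threeDVar_step_sub_eq]
  refine (norm_add_le _ _).trans (add_le_add ?_ ?_)
  · exact ContinuousLinearMap.norm_map_sub_map_le_of_norm_comp_fderiv_le _ hF hderiv _ _
  · rw [norm_smul, Real.norm_of_nonneg hγ, mul_assoc]
    exact mul_le_mul_of_nonneg_left (K.le_opNorm η) hγ

end ThreeDVar

theorem MeasureTheory.integral_le_mul_add_mul {Ω : Type*} [MeasurableSpace Ω] {μ : Measure Ω}
    {f g h : Ω → ℝ} (hf : Integrable f μ) (hg : Integrable g μ) (hh : Integrable h μ)
    {a b : ℝ} (hfgh : ∀ ω, f ω ≤ a * g ω + b * h ω) :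
    ∫ ω, f ω ∂μ ≤ a * ∫ ω, g ω ∂μ + b * ∫ ω, h ω ∂μ := by
  have hrhs : Integrable (fun ω => a * g ω + b * h ω) μ := (hg.const_mul a).add (hh.const_mul b)
  calc ∫ ω, f ω ∂μ ≤ ∫ ω, a * g ω + b * h ω ∂μ := integral_mono hf hrhs hfgh
    _ = a * ∫ ω, g ω ∂μ + b * ∫ ω, h ω ∂μ := by
      rw [integral_add (hg.const_mul a) (hh.const_mul b), integral_const_mul, integral_const_mul]

theorem stmt_4_general {dx dy : ℕ}
    {Ω : Type} [MeasurableSpace Ω] (μ : Measure Ω)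
    (F : Ex dx → Ex dx) (hF : ContDiff ℝ 1 F)
    (H : Ex dx →L[ℝ] Ex dy) (K : Ex dy →L[ℝ] Ex dx)
    (lam : ℝ)
    (hderiv : ∀ x : Ex dx,
      ‖(ContinuousLinearMap.id ℝ (Ex dx) - K.comp H).comp (fderiv ℝ F x)‖ ≤ lam)
    (γ : ℝ) (hγ : 0 ≤ γ)
    (A : ℝ)
    (η : ℕ → Ω → Ex dy)
    (hη_int : ∀ t : ℕ, Integrable (fun ω => ‖η t ω‖) μ)
    (hη_mean : ∀ t : ℕ, ∫ ω, ‖η t ω‖ ∂μ ≤ A)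
    (xtrue : ℕ → Ex dx) (y : ℕ → Ω → Ex dy) (xo : ℕ → Ω → Ex dx)
    (hxtrue : ∀ t : ℕ, xtrue (t + 1) = F (xtrue t))
    (hy : ∀ (t : ℕ) (ω : Ω), y (t + 1) ω = H (xtrue (t + 1)) + γ • η (t + 1) ω)
    (hxo : ∀ (t : ℕ) (ω : Ω), xo (t + 1) ω =
      (ContinuousLinearMap.id ℝ (Ex dx) - K.comp H) (F (xo t ω)) + K (y (t + 1) ω))
    (herr_int : ∀ t : ℕ, Integrable (fun ω => ‖xo t ω - xtrue t‖) μ) :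
    ∀ t : ℕ, ∫ ω, ‖xo (t + 1) ω - xtrue (t + 1)‖ ∂μ ≤
      lam * ∫ ω, ‖xo t ω - xtrue t‖ ∂μ + γ * ‖K‖ * A := by
  intro t
  have hstep : ∀ ω, ‖xo (t + 1) ω - xtrue (t + 1)‖ ≤
      lam * ‖xo t ω - xtrue t‖ + γ * ‖K‖ * ‖η (t + 1) ω‖ := fun ω => by
    rw [hxo, hy, hxtrue]
    exact norm_threeDVar_step_sub_le (hF.differentiable one_ne_zero) H K hderiv _ _ hγ _
  calc ∫ ω, ‖xo (t + 1) ω - xtrue (t + 1)‖ ∂μ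
      ≤ lam * ∫ ω, ‖xo t ω - xtrue t‖ ∂μ + γ * ‖K‖ * ∫ ω, ‖η (t + 1) ω‖ ∂μ :=
        integral_le_mul_add_mul (herr_int (t + 1)) (herr_int t) (hη_int (t + 1)) hstep
    _ ≤ lam * ∫ ω, ‖xo t ω - xtrue t‖ ∂μ + γ * ‖K‖ * A := by
        gcongr
        exact hη_mean (t + 1)

/-- One-step expected-error bound for the operational 3DVar filter:
`E‖x_t^o - x_t^true‖ ≤ lam * E‖x_{t-1}^o - x_{t-1}^true‖ + γ ‖K‖ A`. -/
theorem stmt_4 {dx dy : ℕ} (hdx : 0 < dx) (hdy : 0 < dy)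
    {Ω : Type} [MeasurableSpace Ω] (μ : Measure Ω) [IsProbabilityMeasure μ]
    (F : Ex dx → Ex dx) (hF : ContDiff ℝ 1 F)
    (H : Ex dx →L[ℝ] Ex dy) (K : Ex dy →L[ℝ] Ex dx)
    (lam : ℝ) (hlam : 0 < lam)
    (hderiv : ∀ x : Ex dx,
      ‖(ContinuousLinearMap.id ℝ (Ex dx) - K.comp H).comp (fderiv ℝ F x)‖ ≤ lam)
    (γ : ℝ) (hγ : 0 ≤ γ)
    (A : ℝ) (hA : 0 < A)
    (η : ℕ → Ω → Ex dy)
    (hη_int : ∀ t : ℕ, Integrable (fun ω => ‖η t ω‖) μ)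
    (hη_mean : ∀ t : ℕ, ∫ ω, ‖η t ω‖ ∂μ ≤ A)
    (xtrue : ℕ → Ex dx) (y : ℕ → Ω → Ex dy) (xo : ℕ → Ω → Ex dx)
    (hxtrue : ∀ t : ℕ, xtrue (t + 1) = F (xtrue t))
    (hy : ∀ (t : ℕ) (ω : Ω), y (t + 1) ω = H (xtrue (t + 1)) + γ • η (t + 1) ω)
    (hxo : ∀ (t : ℕ) (ω : Ω), xo (t + 1) ω =
      (ContinuousLinearMap.id ℝ (Ex dx) - K.comp H) (F (xo t ω)) + K (y (t + 1) ω))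
    (herr_int : ∀ t : ℕ, Integrable (fun ω => ‖xo t ω - xtrue t‖) μ) :
    ∀ t : ℕ, ∫ ω, ‖xo (t + 1) ω - xtrue (t + 1)‖ ∂μ ≤
      lam * ∫ ω, ‖xo t ω - xtrue t‖ ∂μ + γ * ‖K‖ * A :=
  stmt_4_general μ F hF H K lam hderiv γ hγ A η hη_int hη_mean xtrue y xo hxtrue hy hxo herr_int
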